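/- arXiv:math/0511705 — 3 statements merged into one kernel-verified Lean document; each statement's English description precedes it below -/
import Mathlib

section
/- If S is an infinite set of points in the Euclidean plane ℝ² such that the Euclidean distance between any two points of S is an integer, then all points of S are collinear, i.e., S is contained in a single line. -/
open scoped RealInnerProductSpace
open Module Polynomial

/-!
Pick non-collinear `A, B, C ∈ S`. For `P ∈ S` the differences `dist P A - dist P B` and
`dist P A - dist P C` are integers bounded by `dist A B` and `dist A C`, so only finitely many
pairs `(m, n)` occur. For fixed `(m, n)`, expanding `‖P - B‖² = (‖P - A‖ - m)²` shows that
`⟪B - A, P - A⟫` and `⟪C - A, P - A⟫` are affine in `t = ‖P - A‖`; as `B - A, C - A` span the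
plane, `P - A = u + t • v` for fixed `u, v`. Then `‖u + t • v‖ = t` is a quadratic equation in `t`,
which is nontrivial unless `u = 0` and `‖v‖ = 1`, and in that case `B - A = m • v` and
`C - A = n • v`, so `A, B, C` would be collinear.
-/

lemma exists_linearIndependent_sub_of_not_collinear {k V : Type*} [DivisionRing k] [AddCommGroup V]
    [Module k V] {s : Set V} (hs : ¬Collinear k s) :
    ∃ A ∈ s, ∃ B ∈ s, ∃ C ∈ s, LinearIndependent k ![B - A, C - A] := by
  obtain ⟨A, hA⟩ := s.nonempty_iff_ne_empty.2 (by rintro rfl; exact hs (collinear_empty k V))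
  have hdir (v : V) : ∃ P ∈ s, ∀ r : k, P - A ≠ r • v := by
    by_contra! h
    exact hs ((collinear_iff_of_mem hA).2 ⟨v, fun P hP => (h P hP).imp fun r hr => by
      rw [vadd_eq_add, ← hr, sub_add_cancel]⟩)
  obtain ⟨B, hB, hBA⟩ := hdir 0
  obtain ⟨C, hC, hCA⟩ := hdir (B - A)
  refine ⟨A, hA, B, hB, C, hC, (LinearIndependent.pair_iff' ?_).2 fun r h => hCA r h.symm⟩
  simpa using hBA 0

lemma finite_setOf_int_abs_le (d : ℝ) : {k : ℤ | |(k : ℝ)| ≤ d}.Finite := by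
  refine (Set.finite_Icc (-⌈d⌉) ⌈d⌉).subset fun k hk => ?_
  obtain ⟨hlo, hhi⟩ := abs_le.1 (Set.mem_ofPred.1 hk)
  have hd := Int.le_ceil d
  exact ⟨by exact_mod_cast (by linarith : (-⌈d⌉ : ℝ) ≤ k), by exact_mod_cast hhi.trans hd⟩

variable {V : Type*} [NormedAddCommGroup V] [InnerProductSpace ℝ V]

lemma inner_sub_eq_of_dist_sub_dist_eq {P A B : V} {m : ℝ} (h : dist P A - dist P B = m) :
    ⟪B - A, P - A⟫ = m * ‖P - A‖ + (‖B - A‖ ^ 2 - m ^ 2) / 2 := by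
  rw [dist_eq_norm, dist_eq_norm] at h
  have hexp : ‖P - B‖ ^ 2 = ‖P - A‖ ^ 2 - 2 * ⟪P - A, B - A⟫ + ‖B - A‖ ^ 2 := by
    rw [← norm_sub_sq_real, sub_sub_sub_cancel_right]
  rw [show ‖P - B‖ = ‖P - A‖ - m by linarith, real_inner_comm] at hexp
  linarith

lemma eq_smul_of_inner_eq_of_norm_sq_eq {x v : V} {m : ℝ} (hv : ‖v‖ = 1) (hxv : ⟪x, v⟫ = m)
    (hx : ‖x‖ ^ 2 = m ^ 2) : x = m • v := by
  rw [← sub_eq_zero, ← norm_eq_zero, ← sq_eq_zero_iff, norm_sub_sq_real, real_inner_smul_right,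
    norm_smul, mul_pow, hv, hxv, hx, Real.norm_eq_abs, sq_abs]
  ring

lemma finite_setOf_norm_add_smul_eq {u v : V} (huv : ¬(u = 0 ∧ ‖v‖ = 1)) :
    {t : ℝ | ‖u + t • v‖ = t}.Finite := by
  set p : ℝ[X] := C (‖v‖ ^ 2 - 1) * X ^ 2 + C (2 * ⟪u, v⟫) * X + C (‖u‖ ^ 2)
  have hp : p ≠ 0 := by
    intro hp
    have h0 := congrArg (coeff · 0) hp
    have h2 := congrArg (coeff · 2) hp
    simp only [p, coeff_add, coeff_C_mul, coeff_X_pow, coeff_X, coeff_C] at h0 h2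
    norm_num at h0 h2
    exact huv ⟨h0, by nlinarith [norm_nonneg v]⟩
  refine (finite_setOfPred_isRoot hp).subset fun t ht => ?_
  have ht2 : ‖u + t • v‖ ^ 2 = t ^ 2 := by rw [Set.mem_ofPred.1 ht]
  rw [norm_add_sq_real, real_inner_smul_right, norm_smul, mul_pow, Real.norm_eq_abs, sq_abs] at ht2
  simp only [Set.mem_ofPred_eq, IsRoot, p, eval_add, eval_mul, eval_C, eval_pow, eval_X]
  linarith

lemma bijective_innerₛₗ_prod_innerₛₗ (hV : finrank ℝ V = 2) {x y : V}
    (hxy : LinearIndependent ℝ ![x, y]) :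
    Function.Bijective ((innerₛₗ ℝ x).prod (innerₛₗ ℝ y)) := by
  have : FiniteDimensional ℝ V := .of_finrank_eq_succ hV
  have hinj : Function.Injective ((innerₛₗ ℝ x).prod (innerₛₗ ℝ y)) := fun p q hpq => by
    let b := basisOfLinearIndependentOfCardEqFinrank hxy (by simp [hV])
    refine InnerProductSpace.ext_inner_left_basis b fun i => ?_
    fin_cases i
    · simpa [b] using congrArg Prod.fst hpq
    · simpa [b] using congrArg Prod.snd hpq
  exact ⟨hinj, (LinearMap.injective_iff_surjective_of_finrank_eq_finrank (by simp [hV])).1 hinj⟩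

lemma finite_setOf_dist_sub_dist_eq (hV : finrank ℝ V = 2) {A B C : V}
    (hABC : LinearIndependent ℝ ![B - A, C - A]) (m n : ℝ) :
    {P : V | dist P A - dist P B = m ∧ dist P A - dist P C = n}.Finite := by
  set Φ := (innerₛₗ ℝ (B - A)).prod (innerₛₗ ℝ (C - A))
  let e := LinearEquiv.ofBijective Φ (bijective_innerₛₗ_prod_innerₛₗ hV hABC)
  set u := e.symm ((‖B - A‖ ^ 2 - m ^ 2) / 2, (‖C - A‖ ^ 2 - n ^ 2) / 2)
  set v := e.symm (m, n)
  have hΦu : Φ u = ((‖B - A‖ ^ 2 - m ^ 2) / 2, (‖C - A‖ ^ 2 - n ^ 2) / 2) := e.apply_symm_apply _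
  have hΦv : Φ v = (m, n) := e.apply_symm_apply _
  have hP : ∀ P, dist P A - dist P B = m ∧ dist P A - dist P C = n →
      P - A = u + ‖P - A‖ • v := by
    rintro P ⟨hB, hC⟩
    have hΦP : Φ (P - A) = (⟪B - A, P - A⟫, ⟪C - A, P - A⟫) := rfl
    refine e.injective ?_
    change Φ (P - A) = Φ (u + ‖P - A‖ • v)
    rw [hΦP, map_add, map_smul, hΦu, hΦv, inner_sub_eq_of_dist_sub_dist_eq hB,
      inner_sub_eq_of_dist_sub_dist_eq hC, Prod.smul_mk, Prod.mk_add_mk, smul_eq_mul, smul_eq_mul]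
    congr 1 <;> ring
  have hnondeg : ¬(u = 0 ∧ ‖v‖ = 1) := by
    rintro ⟨hu, hv⟩
    rw [hu, map_zero] at hΦu
    obtain ⟨hc₁, hc₂⟩ := Prod.ext_iff.1 hΦu
    rw [Prod.fst_zero] at hc₁
    rw [Prod.snd_zero] at hc₂
    have hB : B - A = m • v :=
      eq_smul_of_inner_eq_of_norm_sq_eq hv (congrArg Prod.fst hΦv) (by linarith)
    have hC : C - A = n • v :=
      eq_smul_of_inner_eq_of_norm_sq_eq hv (congrArg Prod.snd hΦv) (by linarith)
    obtain ⟨-, hm⟩ := LinearIndependent.pair_iff.1 hABC n (-m) (by rw [hB, hC]; module)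
    exact hABC.ne_zero 0 (by simpa [neg_eq_zero.1 hm] using hB)
  refine ((finite_setOf_norm_add_smul_eq hnondeg).image fun t => A + (u + t • v)).subset ?_
  intro P hPmem
  have hPA := hP P hPmem
  exact ⟨‖P - A‖, by rw [Set.mem_ofPred_eq, ← hPA], show A + _ = P by rw [← hPA, add_sub_cancel]⟩

lemma finite_setOf_int_dist_sub_dist (hV : finrank ℝ V = 2) {A B C : V}
    (hABC : LinearIndependent ℝ ![B - A, C - A]) :
    {P : V | ∃ m n : ℤ, dist P A - dist P B = m ∧ dist P A - dist P C = n}.Finite := by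
  refine ((finite_setOf_int_abs_le (dist A B)).biUnion fun m _ =>
    (finite_setOf_int_abs_le (dist A C)).biUnion fun n _ =>
      finite_setOf_dist_sub_dist_eq hV hABC m n).subset ?_
  rintro P ⟨m, n, hm, hn⟩
  simp only [Set.mem_iUnion]
  refine ⟨m, ?_, n, ?_, hm, hn⟩
  · rw [Set.mem_ofPred_eq, ← hm, dist_comm P A, dist_comm P B]
    exact abs_dist_sub_le A B P
  · rw [Set.mem_ofPred_eq, ← hn, dist_comm P A, dist_comm P C]
    exact abs_dist_sub_le A C P

/-- **Erdős–Anning theorem**: an infinite set of points in the Euclidean plane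
with pairwise integral distances is collinear. -/
theorem erdos_anning (S : Set (EuclideanSpace ℝ (Fin 2)))
    (hinf : S.Infinite)
    (hdist : ∀ p ∈ S, ∀ q ∈ S, ∃ n : ℤ, dist p q = (n : ℝ)) :
    Collinear ℝ S := by
  by_contra hcol
  obtain ⟨A, hA, B, hB, C, hC, hABC⟩ := exists_linearIndependent_sub_of_not_collinear hcol
  refine hinf ((finite_setOf_int_dist_sub_dist (by simp) hABC).subset fun P hP => ?_)
  obtain ⟨a, ha⟩ := hdist P hP A hA
  obtain ⟨b, hb⟩ := hdist P hP B hB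
  obtain ⟨c, hc⟩ := hdist P hP C hC
  exact ⟨a - b, a - c, by push_cast; rw [ha, hb], by push_cast; rw [ha, hc]⟩
end

section
/- Let A, B, C be three non-collinear points of the Euclidean plane ℝ² and let d₁, d₂ be real numbers. Then the set of points P ∈ ℝ² satisfying dist P A − dist P C = d₁ and dist P B − dist P C = d₂ has at most 4 elements. -/
set_option maxHeartbeats 1000000

open RealInnerProductSpace

open Polynomial in
private lemma quad_roots_aux (a b c : ℝ) (h : ¬(a = 0 ∧ b = 0 ∧ c = 0)) :
    {t : ℝ | a * t ^ 2 + b * t + c = 0}.Finite ∧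
    {t : ℝ | a * t ^ 2 + b * t + c = 0}.ncard ≤ 2 := by
  classical
  set p : Polynomial ℝ := C a * X ^ 2 + C b * X + C c with hp
  have hpe : ∀ t, p.eval t = a * t ^ 2 + b * t + c := by intro t; simp [hp]
  have hpne : p ≠ 0 := by
    intro h0
    refine h ⟨?_, ?_, ?_⟩
    · have := congrArg (fun q => Polynomial.coeff q 2) h0
      simpa [hp] using this
    · have := congrArg (fun q => Polynomial.coeff q 1) h0
      simpa [hp] using this
    · have := congrArg (fun q => Polynomial.coeff q 0) h0
      simpa [hp] using this
  have hset : {t : ℝ | a * t ^ 2 + b * t + c = 0} = ↑p.roots.toFinset := by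
    ext t
    simp [Polynomial.mem_roots, hpne, Polynomial.IsRoot, hpe]
  constructor
  · rw [hset]; exact (p.roots.toFinset : Finset ℝ).finite_toSet
  · rw [hset, Set.ncard_coe_finset]
    calc p.roots.toFinset.card ≤ Multiset.card p.roots := Multiset.toFinset_card_le _
      _ ≤ p.natDegree := Polynomial.card_roots' p
      _ ≤ 2 := Polynomial.natDegree_quadratic_le

/-- Two hyperbolas (loci of constant difference of distances to two pairs of foci
taken from three non-collinear points) intersect in at most `4` points. -/
theorem hyperbola_intersection_card_le_four
    (A B C : EuclideanSpace ℝ (Fin 2)) (d₁ d₂ : ℝ)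
    (hncol : ¬ Collinear ℝ ({A, B, C} : Set (EuclideanSpace ℝ (Fin 2)))) :
    {P : EuclideanSpace ℝ (Fin 2) |
        dist P A - dist P C = d₁ ∧ dist P B - dist P C = d₂}.Finite ∧
    {P : EuclideanSpace ℝ (Fin 2) |
        dist P A - dist P C = d₁ ∧ dist P B - dist P C = d₂}.ncard ≤ 4 := by
  classical
  set S : Set (EuclideanSpace ℝ (Fin 2)) :=
    {P : EuclideanSpace ℝ (Fin 2) | dist P A - dist P C = d₁ ∧ dist P B - dist P C = d₂}
    with hSdef
  set u : EuclideanSpace ℝ (Fin 2) := A - C with hu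
  set w : EuclideanSpace ℝ (Fin 2) := B - C with hw
  -- linear independence of the differences
  have hli : LinearIndependent ℝ ![u, w] := by
    rw [LinearIndependent.pair_iff]
    intro s t hst
    by_contra hcon
    apply hncol
    rw [collinear_iff_exists_forall_eq_smul_vadd]
    by_cases ht : t = 0
    · have hs : s ≠ 0 := fun h => hcon ⟨h, ht⟩
      have hAC : A = C := by
        have h0 : s • u = 0 := by
          have := hst; rw [ht, zero_smul, add_zero] at this; exact this
        rcases smul_eq_zero.mp h0 with h | h
        · exact absurd h hs
        · rw [hu, sub_eq_zero] at h; exact h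
      refine ⟨C, w, fun p hp => ?_⟩
      simp only [Set.mem_insert_iff, Set.mem_singleton_iff] at hp
      rcases hp with h | h | h
      · exact ⟨0, by rw [h, hAC]; simp⟩
      · exact ⟨1, by rw [h, hw]; simp⟩
      · exact ⟨0, by rw [h]; simp⟩
    · refine ⟨C, u, fun p hp => ?_⟩
      simp only [Set.mem_insert_iff, Set.mem_singleton_iff] at hp
      rcases hp with h | h | h
      · exact ⟨1, by rw [h, hu]; simp⟩
      · refine ⟨-s / t, ?_⟩
        have h2 : t • w = (-s) • u := by
          rw [neg_smul]; exact eq_neg_of_add_eq_zero_right hst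
        have h3 : (-s / t) • u = w := by
          calc (-s / t) • u = (t⁻¹ * -s) • u := by rw [div_eq_inv_mul]
            _ = t⁻¹ • ((-s) • u) := by rw [← smul_smul]
            _ = t⁻¹ • (t • w) := by rw [h2]
            _ = w := by rw [smul_smul, inv_mul_cancel₀ ht, one_smul]
        rw [h, vadd_eq_add, h3, hw, sub_add_cancel]
      · exact ⟨0, by rw [h]; simp⟩
  -- the inner-product map is bijective
  let L : EuclideanSpace ℝ (Fin 2) →ₗ[ℝ] ℝ × ℝ :=
    { toFun := fun z => (⟪z, u⟫, ⟪z, w⟫)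
      map_add' := by intro x y; simp [inner_add_left, Prod.ext_iff]
      map_smul' := by
        intro c x
        simp only [real_inner_smul_left, RingHom.id_apply, Prod.smul_mk, smul_eq_mul] }
  have hspan : Submodule.span ℝ (Set.range ![u, w]) = ⊤ := by
    apply Submodule.eq_top_of_finrank_eq
    rw [finrank_span_eq_card hli]
    simp [finrank_euclideanSpace_fin]
  have hinj0 : ∀ z : EuclideanSpace ℝ (Fin 2), ⟪z, u⟫ = 0 → ⟪z, w⟫ = 0 → z = 0 := by
    intro z h1 h2
    have hz : z ∈ Submodule.span ℝ (Set.range ![u, w]) := hspan ▸ Submodule.mem_top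
    rw [Submodule.mem_span_range_iff_exists_fun] at hz
    obtain ⟨cc, hcc⟩ := hz
    have hcc2 : cc 0 • u + cc 1 • w = z := by
      rw [← hcc, Fin.sum_univ_two]
      simp
    rw [real_inner_comm] at h1 h2
    have hzz : ⟪z, z⟫ = 0 := by
      nth_rewrite 1 [← hcc2]
      rw [inner_add_left, real_inner_smul_left, real_inner_smul_left, h1, h2]
      ring
    exact inner_self_eq_zero.mp hzz
  have hLinj : Function.Injective L := by
    intro x y hxy
    have h1 : ⟪x, u⟫ = ⟪y, u⟫ := congrArg Prod.fst hxy
    have h2 : ⟪x, w⟫ = ⟪y, w⟫ := congrArg Prod.snd hxy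
    have := hinj0 (x - y) (by rw [inner_sub_left, h1, sub_self])
      (by rw [inner_sub_left, h2, sub_self])
    exact sub_eq_zero.mp this
  have hLsurj : Function.Surjective L := by
    have hfr : Module.finrank ℝ (EuclideanSpace ℝ (Fin 2)) = Module.finrank ℝ (ℝ × ℝ) := by
      simp [finrank_euclideanSpace_fin]
    exact (LinearMap.injective_iff_surjective_of_finrank_eq_finrank hfr).mp hLinj
  obtain ⟨z₀, hz₀⟩ := hLsurj ((‖u‖ ^ 2 - d₁ ^ 2) / 2, (‖w‖ ^ 2 - d₂ ^ 2) / 2)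
  obtain ⟨z₁, hz₁⟩ := hLsurj (-d₁, -d₂)
  have hz₀u : ⟪z₀, u⟫ = (‖u‖ ^ 2 - d₁ ^ 2) / 2 := congrArg Prod.fst hz₀
  have hz₀w : ⟪z₀, w⟫ = (‖w‖ ^ 2 - d₂ ^ 2) / 2 := congrArg Prod.snd hz₀
  have hz₁u : ⟪z₁, u⟫ = -d₁ := congrArg Prod.fst hz₁
  have hz₁w : ⟪z₁, w⟫ = -d₂ := congrArg Prod.snd hz₁
  -- every point of S lies on the line t ↦ C + z₀ + t • z₁ with t = dist P C
  have key : ∀ P ∈ S, P - C = z₀ + (dist P C) • z₁ := by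
    intro P hP
    obtain ⟨h1, h2⟩ := hP
    set t := dist P C with htdef
    have hnA : ‖P - A‖ ^ 2 = (t + d₁) ^ 2 := by
      rw [← dist_eq_norm]
      have : dist P A = t + d₁ := by linarith
      rw [this]
    have hnB : ‖P - B‖ ^ 2 = (t + d₂) ^ 2 := by
      rw [← dist_eq_norm]
      have : dist P B = t + d₂ := by linarith
      rw [this]
    have hnC : ‖P - C‖ ^ 2 = t ^ 2 := by rw [← dist_eq_norm]
    have hPA : P - A = (P - C) - u := by rw [hu, sub_sub_sub_cancel_right]
    have hPB : P - B = (P - C) - w := by rw [hw, sub_sub_sub_cancel_right]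
    have e1 : ⟪P - C, u⟫ = (‖u‖ ^ 2 - d₁ ^ 2) / 2 + t * (-d₁) := by
      have hh := norm_sub_sq_real (P - C) u
      rw [← hPA, hnA, hnC] at hh
      nlinarith [hh]
    have e2 : ⟪P - C, w⟫ = (‖w‖ ^ 2 - d₂ ^ 2) / 2 + t * (-d₂) := by
      have hh := norm_sub_sq_real (P - C) w
      rw [← hPB, hnB, hnC] at hh
      nlinarith [hh]
    apply hLinj
    have hL1 : L (P - C) = ((‖u‖ ^ 2 - d₁ ^ 2) / 2 + t * (-d₁),
        (‖w‖ ^ 2 - d₂ ^ 2) / 2 + t * (-d₂)) := by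
      have : L (P - C) = (⟪P - C, u⟫, ⟪P - C, w⟫) := rfl
      rw [this, e1, e2]
    have hL2 : L (z₀ + t • z₁) = ((‖u‖ ^ 2 - d₁ ^ 2) / 2 + t * (-d₁),
        (‖w‖ ^ 2 - d₂ ^ 2) / 2 + t * (-d₂)) := by
      rw [map_add, map_smul, hz₀, hz₁]
      simp only [Prod.smul_mk, Prod.mk_add_mk, smul_eq_mul, Prod.mk.injEq]
    exact hL1.trans hL2.symm
  -- injectivity of P ↦ dist P C on S
  have hgInj : Set.InjOn (fun P => dist P C) S := by
    intro P hP Q hQ hPQ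
    have kP := key P hP
    have kQ := key Q hQ
    simp only at hPQ
    rw [hPQ] at kP
    have hsub : P - C = Q - C := kP.trans kQ.symm
    exact sub_left_inj.mp hsub
  -- the quadratic satisfied by t = dist P C
  set a : ℝ := ‖z₁‖ ^ 2 - 1 with ha
  set b : ℝ := 2 * ⟪z₀, z₁⟫ with hb
  set c : ℝ := ‖z₀‖ ^ 2 with hc
  have hq : ∀ P ∈ S, a * (dist P C) ^ 2 + b * (dist P C) + c = 0 := by
    intro P hP
    set t := dist P C with htdef
    have hK := key P hP
    have hnC : ‖P - C‖ ^ 2 = t ^ 2 := by rw [← dist_eq_norm]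
    rw [hK] at hnC
    have hexp := norm_add_sq_real z₀ (t • z₁)
    rw [real_inner_smul_right, norm_smul, mul_pow, Real.norm_eq_abs, sq_abs] at hexp
    rw [hexp] at hnC
    rw [ha, hb, hc]
    nlinarith [hnC]
  by_cases hdeg : a = 0 ∧ b = 0 ∧ c = 0
  · -- degenerate quadratic: contradiction with non-collinearity
    exfalso
    obtain ⟨ha0, hb0, hc0⟩ := hdeg
    have hz₀0 : z₀ = 0 := by
      rw [hc] at hc0
      exact norm_eq_zero.mp (pow_eq_zero_iff (n := 2) (by norm_num) |>.mp hc0)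
    have hz₁1 : ‖z₁‖ ^ 2 = 1 := by rw [ha] at ha0; linarith
    have hu2 : ‖u‖ ^ 2 = d₁ ^ 2 := by
      rw [hz₀0] at hz₀u; simp at hz₀u; linarith
    have hw2 : ‖w‖ ^ 2 = d₂ ^ 2 := by
      rw [hz₀0] at hz₀w; simp at hz₀w; linarith
    rw [real_inner_comm] at hz₁u hz₁w
    have hu' : u = -(d₁ • z₁) := by
      have h0 : ‖u + d₁ • z₁‖ ^ 2 = 0 := by
        rw [norm_add_sq_real, real_inner_smul_right, hz₁u, hu2, norm_smul, mul_pow,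
          Real.norm_eq_abs, sq_abs, hz₁1]
        ring
      have h1 := norm_eq_zero.mp (pow_eq_zero_iff (n := 2) (by norm_num) |>.mp h0)
      exact eq_neg_of_add_eq_zero_left h1
    have hw' : w = -(d₂ • z₁) := by
      have h0 : ‖w + d₂ • z₁‖ ^ 2 = 0 := by
        rw [norm_add_sq_real, real_inner_smul_right, hz₁w, hw2, norm_smul, mul_pow,
          Real.norm_eq_abs, sq_abs, hz₁1]
        ring
      have h1 := norm_eq_zero.mp (pow_eq_zero_iff (n := 2) (by norm_num) |>.mp h0)
      exact eq_neg_of_add_eq_zero_left h1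
    have hrel : d₂ • u + (-d₁) • w = 0 := by
      rw [hu', hw']
      module
    obtain ⟨hd2, hd1⟩ := LinearIndependent.pair_iff.mp hli d₂ (-d₁) hrel
    have hd₁0 : d₁ = 0 := by
      have := neg_eq_zero.mp hd1; linarith
    have hu0 : u = 0 := by rw [hu', hd₁0]; simp
    exact hli.ne_zero 0 (by simpa using hu0)
  · -- nondegenerate quadratic: at most two roots
    obtain ⟨hTfin, hTcard⟩ := quad_roots_aux a b c hdeg
    set T : Set ℝ := {t : ℝ | a * t ^ 2 + b * t + c = 0} with hT
    have hmaps : ∀ P ∈ S, dist P C ∈ T := fun P hP => hq P hP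
    have hSfin : S.Finite := by
      apply Set.Finite.of_finite_image (f := fun P => dist P C) _ hgInj
      exact hTfin.subset (Set.image_subset_iff.mpr hmaps)
    refine ⟨hSfin, ?_⟩
    calc S.ncard ≤ T.ncard := Set.ncard_le_ncard_of_injOn _ hmaps hgInj hTfin
      _ ≤ 2 := hTcard
      _ ≤ 4 := by norm_num
end

section
/- Let A, B, C, D be four affinely independent (non-coplanar) points of Euclidean space ℝ³ and let e₁, e₂, e₃ be real numbers. Then the set of points P ∈ ℝ³ satisfying dist P A − dist P D = e₁, dist P B − dist P D = e₂, and dist P C − dist P D = e₃ is finite. (Geometrically, P is an intersection point of three hyperboloids with focus D and second foci A, B, C respectively.) -/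
/-!
Put `r = dist P D`. Squaring `dist P X = r + e` and subtracting `dist P D ^ 2 = r ^ 2` makes
`⟪X - D, P⟫` an affine function of `r`; since `A - D, B - D, C - D` span the space, all solutions
`P` lie on one line `q + r • v`, parametrized by `r` itself. If there were infinitely many, then
`‖(q - D) + r • v‖ = r` for infinitely many `r` forces `q = D` and `‖v‖ = 1`, and likewise
`‖(D - X) + r • v‖ = r + e` forces `X` onto the line `D + ℝ v` for each `X = A, B, C`, contradicting
affine independence.
-/

open Module Polynomial Submodule
open scoped RealInnerProductSpace

theorem quadratic_coeffs_eq_zero_of_infinite {a b c : ℝ} {T : Set ℝ} (hT : T.Infinite)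
    (h : ∀ t ∈ T, a * t ^ 2 + b * t + c = 0) : a = 0 ∧ b = 0 ∧ c = 0 := by
  have hq : (C a * X ^ 2 + C b * X + C c : ℝ[X]) = 0 :=
    eq_zero_of_infinite_isRoot _ <| hT.mono fun t ht => by simpa using h t ht
  refine ⟨?_, ?_, ?_⟩
  · simpa using congrArg (coeff · 2) hq
  · simpa using congrArg (coeff · 1) hq
  · simpa using congrArg (coeff · 0) hq

variable {E : Type*} [NormedAddCommGroup E] [InnerProductSpace ℝ E]

theorem norm_eq_one_and_eq_smul_of_norm_add_smul_eq {p w : E} {β : ℝ} {T : Set ℝ}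
    (hT : T.Infinite) (h : ∀ t ∈ T, ‖p + t • w‖ = t + β) : ‖w‖ = 1 ∧ p = β • w := by
  have hquad : ∀ t ∈ T,
      (‖w‖ ^ 2 - 1) * t ^ 2 + 2 * (⟪p, w⟫ - β) * t + (‖p‖ ^ 2 - β ^ 2) = 0 := by
    intro t ht
    have hsq := congrArg (· ^ 2) (h t ht)
    simp only [norm_add_sq_real, norm_smul, real_inner_smul_right, Real.norm_eq_abs, mul_pow,
      sq_abs] at hsq
    linarith
  obtain ⟨hw, hpw, hp⟩ := quadratic_coeffs_eq_zero_of_infinite hT hquad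
  have hw : ‖w‖ = 1 := by nlinarith [norm_nonneg w]
  -- equality case of Cauchy–Schwarz: `⟪p, w⟫ = β`, `‖p‖ = |β|`, `‖w‖ = 1`
  have hdiff : ‖p - β • w‖ ^ 2 = 0 := by
    rw [norm_sub_sq_real, real_inner_smul_right, norm_smul, Real.norm_eq_abs, mul_pow, sq_abs, hw,
      show ⟪p, w⟫ = β by linarith]
    linarith
  exact ⟨hw, sub_eq_zero.mp (by simpa using hdiff)⟩

theorem inner_eq_of_norm_sub_sub_norm_eq {x a : E} {e : ℝ} (h : ‖x - a‖ - ‖x‖ = e) :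
    ⟪a, x⟫ = (‖a‖ ^ 2 - e ^ 2) / 2 - e * ‖x‖ := by
  have hsq : ‖x - a‖ ^ 2 = (‖x‖ + e) ^ 2 := by rw [← h]; ring
  rw [norm_sub_sq_real, real_inner_comm] at hsq
  linarith

theorem ext_inner_left_of_span_eq_top {ι : Type*} {u : ι → E}
    (hu : span ℝ (Set.range u) = ⊤) {x y : E} (h : ∀ i, ⟪u i, x⟫ = ⟪u i, y⟫) : x = y :=
  ext_inner_left ℝ fun v =>
    LinearMap.congr_fun (LinearMap.ext_on_range hu (f := (innerₗ E).flip x)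
      (g := (innerₗ E).flip y) h) v

theorem exists_eq_add_smul_of_forall_inner_eq {ι : Type*} {u : ι → E}
    (hu : span ℝ (Set.range u) = ⊤) {S : Set E} (f : E → ℝ) (c w : ι → ℝ)
    (hS : ∀ x ∈ S, ∀ i, ⟪u i, x⟫ = c i + f x * w i) : ∃ q v, ∀ x ∈ S, x = q + f x • v := by
  by_cases hf : ∃ x₀ ∈ S, ∃ x₁ ∈ S, f x₀ ≠ f x₁
  · obtain ⟨x₀, h₀, x₁, h₁, hne⟩ := hf
    have hne' : f x₁ - f x₀ ≠ 0 := sub_ne_zero.mpr hne.symm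
    refine ⟨x₀ - f x₀ • (f x₁ - f x₀)⁻¹ • (x₁ - x₀), (f x₁ - f x₀)⁻¹ • (x₁ - x₀),
      fun x hx => ext_inner_left_of_span_eq_top hu fun i => ?_⟩
    simp only [inner_add_right, inner_sub_right, real_inner_smul_right, hS _ hx, hS _ h₀,
      hS _ h₁]
    field_simp
    ring
  · push Not at hf
    obtain rfl | ⟨x₀, h₀⟩ := S.eq_empty_or_nonempty
    · simp
    refine ⟨x₀, 0, fun x hx => ?_⟩
    rw [smul_zero, add_zero]
    exact ext_inner_left_of_span_eq_top hu fun i => by rw [hS x hx, hS x₀ h₀, hf x hx x₀ h₀]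

theorem finite_setOf_dist_sub_dist_eq_s19 {ι : Type*} (p : ι → E) (i₀ : ι)
    (hp : vectorSpan ℝ (Set.range p) = ⊤) (hE : 2 ≤ finrank ℝ E) (e : ι → ℝ) :
    {x | ∀ i, dist x (p i) - dist x (p i₀) = e i}.Finite := by
  set d := p i₀
  set S := {x | ∀ i, dist x (p i) - dist x d = e i}
  have hspan : span ℝ (Set.range fun i => p i - d) = ⊤ := by
    rw [← hp, vectorSpan_range_eq_span_range_vsub_right ℝ p i₀]
    rfl
  obtain ⟨q, v, hline⟩ := exists_eq_add_smul_of_forall_inner_eq hspan (S := S)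
    (fun x => dist x d) (fun i => (‖p i - d‖ ^ 2 - e i ^ 2) / 2 + ⟪p i - d, d⟫) (fun i => -e i) <| by
      intro x hx i
      have hinner := inner_eq_of_norm_sub_sub_norm_eq (x := x - d) (a := p i - d) (e := e i) <| by
        rw [sub_sub_sub_cancel_right, ← dist_eq_norm, ← dist_eq_norm]
        exact hx i
      rw [inner_sub_right, ← dist_eq_norm x d] at hinner
      linarith
  by_contra hS
  set T := (fun x => dist x d) '' S
  have hT : T.Infinite := fun hT =>
    hS <| (hT.image fun t => q + t • v).subset fun x hx => ⟨_, ⟨x, hx, rfl⟩, (hline x hx).symm⟩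
  have hsub : ∀ x ∈ S, ∀ a, x - a = (q - a) + dist x d • v := fun x hx a => by
    conv_lhs => rw [hline x hx]
    abel
  obtain ⟨-, hq⟩ := norm_eq_one_and_eq_smul_of_norm_add_smul_eq (β := 0) hT <| by
    rintro _ ⟨x, hx, rfl⟩
    rw [← hsub x hx, add_zero, ← dist_eq_norm]
  rw [zero_smul, sub_eq_zero] at hq
  subst hq
  have hfoci : ∀ i, p i - d ∈ span ℝ {v} := fun i => by
    obtain ⟨-, hi⟩ := norm_eq_one_and_eq_smul_of_norm_add_smul_eq (p := d - p i) (β := e i) hT <| by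
      rintro _ ⟨x, hx, rfl⟩
      rw [← hsub x hx, ← dist_eq_norm]
      linarith [hx i]
    exact mem_span_singleton.mpr ⟨-e i, by rw [neg_smul, ← hi, neg_sub]⟩
  have htop : span ℝ {v} = ⊤ :=
    top_le_iff.mp <| hspan ▸ span_le.mpr (Set.range_subset_iff.mpr hfoci)
  have hrank := finrank_span_le_card (R := ℝ) ({v} : Set E)
  rw [htop, finrank_top, Set.toFinset_singleton, Finset.card_singleton] at hrank
  omega

/-- Given four affinely independent points `A, B, C, D` of Euclidean `3`-space and
real numbers `e₁, e₂, e₃`, the set of points `P` with `dist P A - dist P D = e₁`,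
`dist P B - dist P D = e₂` and `dist P C - dist P D = e₃` is finite. -/
theorem hyperboloid_intersection_finite
    (A B C D : EuclideanSpace ℝ (Fin 3)) (e₁ e₂ e₃ : ℝ)
    (hindep : AffineIndependent ℝ ![A, B, C, D]) :
    {P : EuclideanSpace ℝ (Fin 3) |
        dist P A - dist P D = e₁ ∧ dist P B - dist P D = e₂ ∧
        dist P C - dist P D = e₃}.Finite := by
  have hspan : vectorSpan ℝ (Set.range ![A, B, C, D]) = ⊤ :=
    hindep.vectorSpan_eq_top_of_card_eq_finrank_add_one (by simp)
  refine (finite_setOf_dist_sub_dist_eq_s19 ![A, B, C, D] 3 hspan (by simp) ![e₁, e₂, e₃, 0]).subset ?_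
  rintro P ⟨h₁, h₂, h₃⟩ i
  fin_cases i <;> simp [h₁, h₂, h₃]
end
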